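/- For every Θ = (θ₁,…,θ₅) with all θ_i > 0 and θ₁+⋯+θ₅ < π, the Hildebrand matrix T(Θ) is copositive: vᵀT(Θ)v ≥ 0 for every v ∈ ℝ⁵ with all entries nonnegative. -/

import Mathlib

open Matrix Real

/-- The Hildebrand matrix `T(Θ)` with parameters `θ₁ = θ 0, …, θ₅ = θ 4`. -/
noncomputable def Hildebrand (θ : Fin 5 → ℝ) : Matrix (Fin 5) (Fin 5) ℝ :=
  !![1, -cos (θ 0), cos (θ 0 + θ 1), cos (θ 3 + θ 4), -cos (θ 4);
     -cos (θ 0), 1, -cos (θ 1), cos (θ 1 + θ 2), cos (θ 4 + θ 0);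
     cos (θ 0 + θ 1), -cos (θ 1), 1, -cos (θ 2), cos (θ 2 + θ 3);
     cos (θ 3 + θ 4), cos (θ 1 + θ 2), -cos (θ 2), 1, -cos (θ 3);
     -cos (θ 4), cos (θ 4 + θ 0), cos (θ 2 + θ 3), -cos (θ 3), 1]

/-!
With `φ_k = θ₁ + ⋯ + θ_{k-1}`, the matrix `T(Θ)` agrees with the Gram matrix of the unit vectors
`(-1)^k e^{iφ_k}` except in the entries `(1,4)`, `(2,5)`, `(1,5)`, which wrap around the pentagon.
So `vᵀ T(Θ) v` is a sum of two squares plus `2 (a v₁v₄ + b v₂v₅ - c v₁v₅)`, where `a`, `b`, `c` are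
sums of two cosines whose arguments add up to `θ₁ + ⋯ + θ₅ < π`. Hence `a, b ≥ 0`, and by
sum-to-product `c ≤ a` once `θ₅ ≤ θ₁ + θ₂ + θ₃` and `c ≤ b` once `θ₅ ≤ θ₂ + θ₃ + θ₄`; then `c v₁v₅`
is absorbed by `a v₁v₄` if `v₅ ≤ v₄`, or by `b v₂v₅` if `v₁ ≤ v₂`. The form is invariant under
cyclic relabelling, and moving the largest angle to `θ₁` or to `θ₃`, depending on how `v` compares
at the two neighbouring vertices, lands in one of these two cases.
-/

lemma cos_add_cos_nonneg {x y : ℝ} (hx : 0 ≤ x) (hy : 0 ≤ y) (hxy : x + y ≤ π) :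
    0 ≤ cos x + cos y := by
  have h : cos (π - x) ≤ cos y := cos_le_cos_of_nonneg_of_le_pi hy (by linarith) (by linarith)
  rw [cos_pi_sub] at h
  linarith

lemma cos_add_cos_le_cos_add_cos {x y x' y' : ℝ} (hs : x + y = x' + y') (hπ : |x + y| ≤ π)
    (hd : |x - y| ≤ |x' - y'|) (hd' : |x' - y'| ≤ 2 * π) :
    cos x' + cos y' ≤ cos x + cos y := by
  rw [cos_add_cos, cos_add_cos, ← hs, ← cos_abs ((x - y) / 2), ← cos_abs ((x' - y') / 2)]
  have hmid : 0 ≤ cos ((x + y) / 2) :=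
    cos_nonneg_of_mem_Icc ⟨by linarith [neg_abs_le (x + y)], by linarith [le_abs_self (x + y)]⟩
  have hhalf : |(x - y) / 2| ≤ |(x' - y') / 2| := by
    simp only [abs_div, abs_two]
    linarith
  gcongr
  exact cos_le_cos_of_nonneg_of_le_pi (abs_nonneg _) (by rw [abs_div, abs_two]; linarith) hhalf

lemma mul_add_mul_sub_mul_nonneg {a b c x₀ x₁ x₃ x₄ : ℝ} (ha : 0 ≤ a) (hb : 0 ≤ b)
    (h₀ : 0 ≤ x₀) (h₁ : 0 ≤ x₁) (h₃ : 0 ≤ x₃) (h₄ : 0 ≤ x₄)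
    (h : (c ≤ a ∧ x₄ ≤ x₃) ∨ (c ≤ b ∧ x₀ ≤ x₁)) :
    0 ≤ a * x₀ * x₃ + b * x₁ * x₄ - c * x₀ * x₄ := by
  rcases h with ⟨hca, hx⟩ | ⟨hcb, hx⟩
  · have : c * x₀ * x₄ ≤ a * x₀ * x₃ := by gcongr
    nlinarith [mul_nonneg (mul_nonneg hb h₁) h₄]
  · have : c * x₀ * x₄ ≤ b * x₁ * x₄ := by gcongr
    nlinarith [mul_nonneg (mul_nonneg ha h₀) h₃]

noncomputable def hildebrandForm (θ v : Fin 5 → ℝ) : ℝ :=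
  ∑ i, (v i ^ 2 - 2 * cos (θ i) * v i * v (i + 1) + 2 * cos (θ i + θ (i + 1)) * v i * v (i + 2))

lemma dotProduct_hildebrand_mulVec (θ v : Fin 5 → ℝ) :
    v ⬝ᵥ Hildebrand θ *ᵥ v = hildebrandForm θ v := by
  simp only [Hildebrand, hildebrandForm, dotProduct, mulVec, Fin.sum_univ_five, of_apply,
    cons_val', cons_val_zero, cons_val_one, head_cons, empty_val', cons_val_fin_one,
    cons_val_two, tail_cons, cons_val_three, cons_val_four, head_fin_const, Fin.reduceAdd]
  ring

lemma hildebrandForm_comp_add_left (θ v : Fin 5 → ℝ) (k : Fin 5) :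
    hildebrandForm (fun i ↦ θ (k + i)) (fun i ↦ v (k + i)) = hildebrandForm θ v := by
  simp only [hildebrandForm, ← add_assoc]
  exact Equiv.sum_comp (Equiv.addLeft k)
    fun i ↦ v i ^ 2 - 2 * cos (θ i) * v i * v (i + 1) + 2 * cos (θ i + θ (i + 1)) * v i * v (i + 2)

lemma hildebrandForm_eq_sq_add_sq (θ v : Fin 5 → ℝ) :
    hildebrandForm θ v =
      (v 0 - cos (θ 0) * v 1 + cos (θ 0 + θ 1) * v 2 - cos (θ 0 + θ 1 + θ 2) * v 3
          + cos (θ 0 + θ 1 + θ 2 + θ 3) * v 4) ^ 2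
        + (sin (θ 0) * v 1 - sin (θ 0 + θ 1) * v 2 + sin (θ 0 + θ 1 + θ 2) * v 3
          - sin (θ 0 + θ 1 + θ 2 + θ 3) * v 4) ^ 2
        + 2 * ((cos (θ 0 + θ 1 + θ 2) + cos (θ 3 + θ 4)) * v 0 * v 3
          + (cos (θ 1 + θ 2 + θ 3) + cos (θ 4 + θ 0)) * v 1 * v 4
          - (cos (θ 0 + θ 1 + θ 2 + θ 3) + cos (θ 4)) * v 0 * v 4) := by
  have cos_sub_eq {x y : ℝ} (z : ℝ) (h : z = x - y) : cos z = cos x * cos y + sin x * sin y := by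
    rw [h, cos_sub]
  have h₁ := cos_sub_eq (θ 1) (x := θ 0 + θ 1) (y := θ 0) (by ring)
  have h₂ := cos_sub_eq (θ 2) (x := θ 0 + θ 1 + θ 2) (y := θ 0 + θ 1) (by ring)
  have h₃ := cos_sub_eq (θ 3) (x := θ 0 + θ 1 + θ 2 + θ 3) (y := θ 0 + θ 1 + θ 2) (by ring)
  have h₁₂ := cos_sub_eq (θ 1 + θ 2) (x := θ 0 + θ 1 + θ 2) (y := θ 0) (by ring)
  have h₂₃ := cos_sub_eq (θ 2 + θ 3) (x := θ 0 + θ 1 + θ 2 + θ 3) (y := θ 0 + θ 1) (by ring)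
  have h₁₂₃ := cos_sub_eq (θ 1 + θ 2 + θ 3) (x := θ 0 + θ 1 + θ 2 + θ 3) (y := θ 0) (by ring)
  simp only [hildebrandForm, Fin.sum_univ_five, Fin.reduceAdd]
  linear_combination (-2 * v 1 * v 2) * h₁ + (-2 * v 2 * v 3) * h₂ + (-2 * v 3 * v 4) * h₃
    + (2 * v 1 * v 3) * h₁₂ + (2 * v 2 * v 4) * h₂₃ + (-2 * v 1 * v 4) * h₁₂₃
    - v 1 ^ 2 * sin_sq_add_cos_sq (θ 0) - v 2 ^ 2 * sin_sq_add_cos_sq (θ 0 + θ 1)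
    - v 3 ^ 2 * sin_sq_add_cos_sq (θ 0 + θ 1 + θ 2)
    - v 4 ^ 2 * sin_sq_add_cos_sq (θ 0 + θ 1 + θ 2 + θ 3)

lemma hildebrandForm_nonneg_of_last_angle_le {θ v : Fin 5 → ℝ} (hθ : ∀ i, 0 < θ i)
    (hsum : ∑ i, θ i < π) (hv : ∀ i, 0 ≤ v i)
    (h : (θ 4 ≤ θ 0 + θ 1 + θ 2 ∧ v 4 ≤ v 3) ∨ (θ 4 ≤ θ 1 + θ 2 + θ 3 ∧ v 0 ≤ v 1)) :
    0 ≤ hildebrandForm θ v := by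
  rw [Fin.sum_univ_five] at hsum
  have := hθ 0; have := hθ 1; have := hθ 2; have := hθ 3; have := hθ 4
  have hcross : 0 ≤ (cos (θ 0 + θ 1 + θ 2) + cos (θ 3 + θ 4)) * v 0 * v 3
      + (cos (θ 1 + θ 2 + θ 3) + cos (θ 4 + θ 0)) * v 1 * v 4
      - (cos (θ 0 + θ 1 + θ 2 + θ 3) + cos (θ 4)) * v 0 * v 4 := by
    refine mul_add_mul_sub_mul_nonneg (cos_add_cos_nonneg (by linarith) (by linarith) (by linarith))
      (cos_add_cos_nonneg (by linarith) (by linarith) (by linarith))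
      (hv 0) (hv 1) (hv 3) (hv 4) (h.imp (And.imp_left fun h ↦ ?_) (And.imp_left fun h ↦ ?_)) <;>
    exact cos_add_cos_le_cos_add_cos (by ring) (abs_le.2 ⟨by linarith, by linarith⟩)
      (abs_le_abs (by linarith) (by linarith)) (abs_le.2 ⟨by linarith, by linarith⟩)
  rw [hildebrandForm_eq_sq_add_sq]
  have := sq_nonneg (v 0 - cos (θ 0) * v 1 + cos (θ 0 + θ 1) * v 2 - cos (θ 0 + θ 1 + θ 2) * v 3
    + cos (θ 0 + θ 1 + θ 2 + θ 3) * v 4)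
  have := sq_nonneg (sin (θ 0) * v 1 - sin (θ 0 + θ 1) * v 2 + sin (θ 0 + θ 1 + θ 2) * v 3
    - sin (θ 0 + θ 1 + θ 2 + θ 3) * v 4)
  linarith

/-- every Hildebrand matrix `T(Θ)` is copositive. -/
theorem hildebrand_copositive (θ : Fin 5 → ℝ) (hθ : ∀ i, 0 < θ i) (hsum : (∑ i, θ i) < π)
    (v : Fin 5 → ℝ) (hv : ∀ i, 0 ≤ v i) :
    0 ≤ v ⬝ᵥ (Hildebrand θ).mulVec v := by
  obtain ⟨m, -, hm⟩ := Finset.exists_max_image Finset.univ θ Finset.univ_nonempty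
  have hrotate (k : Fin 5) (h : (θ (k + 4) ≤ θ k + θ (k + 1) + θ (k + 2) ∧ v (k + 4) ≤ v (k + 3))
      ∨ (θ (k + 4) ≤ θ (k + 1) + θ (k + 2) + θ (k + 3) ∧ v k ≤ v (k + 1))) :
      0 ≤ hildebrandForm θ v := by
    rw [← hildebrandForm_comp_add_left θ v k]
    exact hildebrandForm_nonneg_of_last_angle_le (fun i ↦ hθ _)
      ((Equiv.sum_comp (Equiv.addLeft k) θ).trans_lt hsum) (fun i ↦ hv _) (by simpa only [add_zero])
  rw [dotProduct_hildebrand_mulVec]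
  rcases le_total (v (m + 4)) (v (m + 3)) with h | h
  · refine hrotate m (Or.inl ⟨?_, h⟩)
    linarith [hm (m + 4) (Finset.mem_univ _), hθ (m + 1), hθ (m + 2)]
  · refine hrotate (m + 3) (Or.inr ?_)
    simp only [add_assoc, Fin.reduceAdd, add_zero]
    exact ⟨by linarith [hm (m + 2) (Finset.mem_univ _), hθ (m + 4), hθ (m + 1)], h⟩
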